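/- arXiv:2204.07278 — 2 statements merged into one kernel-verified Lean document; each statement's English description precedes it below -/
import Mathlib

section
/- Suppose the CFL condition α·sup_{x∈Ω}|f(x)| + 2βν < 1 holds, λ > 0, ν > 0, and 0 ≤ g(x_i, M̄_{i,j}) ≤ G for all i,j. Let (Ψ_{i,j}) solve the explicit backward finite-difference scheme. Then for each j = 1,…,N_t: (1/(1 + (Δt/λ)G))·min_i Ψ_{i,j} ≤ Ψ_{i,j-1} ≤ max_i Ψ_{i,j} for every i, provided Ψ_{i,j} ≥ 0 for all i. Consequently, if Ψ_{i,N_t} ≥ 0 for all i, then Ψ_{i,j} ≥ (1 + (Δt/λ)G)^{-(N_t-j)}·min_i Ψ_{i,N_t} for all i and j. -/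
/-! Solving the scheme for `Ψ_{i,j-1}` gives
`(1 + (Δt/λ) g_i) Ψ_{i,j-1} = (1 - a - b) Ψ_{i,j} + a Ψ_{i+1,j} + b Ψ_{i-1,j}` with upwind
weights `a = α f_i⁺ + βν`, `b = βν - α f_i⁻ ≥ 0`, and the CFL condition gives
`a + b ≤ 1`. So the right-hand side is a convex combination of neighbouring values, hence lies
between their minimum and maximum, and dividing by `1 + (Δt/λ) g_i ∈ [1, 1 + (Δt/λ) G]` gives the
one-step bounds. Iterating the lower bound backwards from `t_{N_t}` gives the geometric decay. -/

lemma Function.Periodic.le_sSup_image_Icc {h : ℝ → ℝ} {p : ℝ} (hh : Continuous h)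
    (hper : Function.Periodic h p) (hp : 0 < p) (a y : ℝ) :
    h y ≤ sSup (h '' Set.Icc a (a + p)) := by
  obtain ⟨z, hz, hzy⟩ := hper.exists_mem_Ico hp y a
  rw [hzy]
  exact le_csSup (isCompact_Icc.image hh).bddAbove ⟨z, Set.Ico_subset_Icc_self hz, rfl⟩

lemma three_point_combination_mem_Icc {a b m M p q r : ℝ} (ha : 0 ≤ a) (hb : 0 ≤ b)
    (hab : a + b ≤ 1) (hp : p ∈ Set.Icc m M) (hq : q ∈ Set.Icc m M) (hr : r ∈ Set.Icc m M) :
    (1 - a - b) * p + a * q + b * r ∈ Set.Icc m M := by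
  obtain ⟨hp₁, hp₂⟩ := hp
  obtain ⟨hq₁, hq₂⟩ := hq
  obtain ⟨hr₁, hr₂⟩ := hr
  constructor <;> nlinarith

lemma bounds_of_mul_one_add_eq {P R d D m M : ℝ} (hd : 0 ≤ d) (hdD : d ≤ D) (hm : 0 ≤ m)
    (hR : R ∈ Set.Icc m M) (hPR : P * (1 + d) = R) :
    1 / (1 + D) * m ≤ P ∧ P ≤ M := by
  have hP : 0 ≤ P := by nlinarith [hR.1]
  constructor
  · rw [one_div, inv_mul_le_iff₀ (by linarith)]
    nlinarith [hR.1, mul_le_mul_of_nonneg_left hdD hP]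
  · nlinarith [hR.2]

lemma upwind_step_eq {Δt Δx ν lam gi fi P Pr Pl Pprev : ℝ}
    (hΔt : Δt ≠ 0) (hΔx : Δx ≠ 0) (hlam : lam ≠ 0)
    (hE : (Pprev - P) / Δt =
      max fi 0 * ((Pr - P) / Δx) + min fi 0 * ((P - Pl) / Δx)
        + ν * ((Pr - 2 * P + Pl) / Δx ^ 2) - (1 / lam) * gi * Pprev) :
    Pprev * (1 + Δt / lam * gi) =
      (1 - (Δt / Δx * max fi 0 + Δt / Δx ^ 2 * ν) - (Δt / Δx ^ 2 * ν - Δt / Δx * min fi 0)) * P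
        + (Δt / Δx * max fi 0 + Δt / Δx ^ 2 * ν) * Pr
        + (Δt / Δx ^ 2 * ν - Δt / Δx * min fi 0) * Pl := by
  field_simp at hE ⊢
  linear_combination hE

lemma upwind_step_bounds {Δt Δx ν lam gi G fi m M P Pr Pl Pprev : ℝ}
    (hΔt : 0 < Δt) (hΔx : 0 < Δx) (hlam : 0 < lam) (hν : 0 ≤ ν)
    (hCFL : Δt / Δx * |fi| + 2 * (Δt / Δx ^ 2) * ν ≤ 1) (hg : 0 ≤ gi) (hgG : gi ≤ G)
    (hm : 0 ≤ m) (hP : P ∈ Set.Icc m M) (hPr : Pr ∈ Set.Icc m M) (hPl : Pl ∈ Set.Icc m M)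
    (hE : (Pprev - P) / Δt =
      max fi 0 * ((Pr - P) / Δx) + min fi 0 * ((P - Pl) / Δx)
        + ν * ((Pr - 2 * P + Pl) / Δx ^ 2) - (1 / lam) * gi * Pprev) :
    1 / (1 + Δt / lam * G) * m ≤ Pprev ∧ Pprev ≤ M := by
  have hα : 0 ≤ Δt / Δx := by positivity
  have hβν : 0 ≤ Δt / Δx ^ 2 * ν := by positivity
  have hmax : 0 ≤ Δt / Δx * max fi 0 := mul_nonneg hα (le_max_right _ _)
  have hmin : Δt / Δx * min fi 0 ≤ 0 := mul_nonpos_of_nonneg_of_nonpos hα (min_le_right _ _)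
  have hweights : Δt / Δx * max fi 0 - Δt / Δx * min fi 0 = Δt / Δx * |fi| := by
    rcases le_total fi 0 with h | h
    · rw [max_eq_right h, min_eq_left h, abs_of_nonpos h]; ring
    · rw [max_eq_left h, min_eq_right h, abs_of_nonneg h]; ring
  refine bounds_of_mul_one_add_eq (by positivity) (by gcongr) hm
    (three_point_combination_mem_Icc (by linarith) (by linarith) (by linarith) hP hPr hPl)
    (upwind_step_eq hΔt.ne' hΔx.ne' hlam.ne' hE)

lemma pow_mul_iInf_le_of_backward_step {ι : Type*} [Finite ι] [Nonempty ι] (u : ι → ℕ → ℝ)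
    {c : ℝ} (N : ℕ) (hc : 0 ≤ c)
    (hstep : ∀ j, 1 ≤ j → j ≤ N → (∀ i, 0 ≤ u i j) → ∀ i, c * ⨅ k, u k j ≤ u i (j - 1))
    (hN : ∀ i, 0 ≤ u i N) :
    ∀ i, ∀ j ≤ N, c ^ (N - j) * ⨅ k, u k N ≤ u i j := by
  have hm : 0 ≤ ⨅ k, u k N := le_ciInf hN
  suffices h : ∀ n ≤ N, ∀ i, c ^ n * ⨅ k, u k N ≤ u i (N - n) by
    intro i j hj
    simpa [Nat.sub_sub_self hj] using h (N - j) (Nat.sub_le N j) i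
  intro n
  induction n with
  | zero => exact fun _ i => by simpa using ciInf_le (Finite.bddBelow_range _) i
  | succ n ih =>
    intro hn i
    have hprev := ih (by omega)
    have hpos : ∀ k, 0 ≤ u k (N - n) := fun k => (by positivity : 0 ≤ c ^ n * _).trans (hprev k)
    calc c ^ (n + 1) * ⨅ k, u k N = c * (c ^ n * ⨅ k, u k N) := by ring
      _ ≤ c * ⨅ k, u k (N - n) := by gcongr; exact le_ciInf hprev
      _ ≤ u i (N - n - 1) := hstep (N - n) (by omega) (by omega) hpos i
      _ = u i (N - (n + 1)) := by rw [Nat.sub_sub]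

theorem stmt4_general (T : ℝ) (hT : 0 < T) (Nx Nt : ℕ) (hNx : 1 ≤ Nx) (hNt : 1 ≤ Nt)
    (f : ℝ → ℝ) (hf : Continuous f) (hfper : Function.Periodic f 2)
    (g : ℝ → ℝ → ℝ) (G : ℝ)
    (lam ν : ℝ) (hlam : 0 < lam) (hν : 0 < ν)
    -- grid parameters
    (Δx Δt α β : ℝ)
    (hΔx : Δx = 1 / (Nx : ℝ)) (hΔt : Δt = T / (Nt : ℝ))
    (hα : α = Δt / Δx) (hβ : β = Δt / Δx ^ 2)
    (x : ZMod (2 * Nx + 1) → ℝ)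
    -- CFL condition
    (hCFL : α * sSup ((fun y => |f y|) '' Set.Icc (-1 : ℝ) 1) + 2 * β * ν < 1)
    -- data M̄ with 0 ≤ g(x_i, M̄_{i,j}) ≤ G, and the scheme solution Ψ
    (M Ψ : ZMod (2 * Nx + 1) → ℕ → ℝ)
    (hg : ∀ i, ∀ j ≤ Nt, 0 ≤ g (x i) (M i j) ∧ g (x i) (M i j) ≤ G)
    (hscheme : ∀ j, 1 ≤ j → j ≤ Nt → ∀ i,
      (Ψ i (j - 1) - Ψ i j) / Δt =
        max (f (x i)) 0 * ((Ψ (i + 1) j - Ψ i j) / Δx)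
          + min (f (x i)) 0 * ((Ψ i j - Ψ (i - 1) j) / Δx)
          + ν * ((Ψ (i + 1) j - 2 * Ψ i j + Ψ (i - 1) j) / Δx ^ 2)
          - (1 / lam) * g (x i) (M i j) * Ψ i (j - 1)) :
    (∀ j, 1 ≤ j → j ≤ Nt → (∀ i, 0 ≤ Ψ i j) → ∀ i,
      (1 / (1 + (Δt / lam) * G)) * (⨅ i' : ZMod (2 * Nx + 1), Ψ i' j) ≤ Ψ i (j - 1) ∧
      Ψ i (j - 1) ≤ ⨆ i' : ZMod (2 * Nx + 1), Ψ i' j) ∧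
    ((∀ i, 0 ≤ Ψ i Nt) → ∀ i, ∀ j ≤ Nt,
      ((1 + (Δt / lam) * G)⁻¹) ^ (Nt - j)
          * (⨅ i' : ZMod (2 * Nx + 1), Ψ i' Nt) ≤ Ψ i j) := by
  have : NeZero (2 * Nx + 1) := ⟨by omega⟩
  have hΔt0 : 0 < Δt := by rw [hΔt]; exact div_pos hT (by exact_mod_cast hNt)
  have hΔx0 : 0 < Δx := by rw [hΔx]; exact one_div_pos.mpr (by exact_mod_cast hNx)
  have hfS : ∀ y, |f y| ≤ sSup ((fun y => |f y|) '' Set.Icc (-1 : ℝ) 1) := by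
    simpa only [Function.comp_def, (by norm_num : (-1 : ℝ) + 2 = 1)] using
      (hfper.comp (|·|)).le_sSup_image_Icc hf.abs two_pos (-1)
  have hα0 : 0 ≤ α := by rw [hα]; positivity
  have hCFLx : ∀ i, Δt / Δx * |f (x i)| + 2 * (Δt / Δx ^ 2) * ν ≤ 1 := fun i => by
    rw [← hα, ← hβ]
    linarith [mul_le_mul_of_nonneg_left (hfS (x i)) hα0]
  have hmem : ∀ j k, Ψ k j ∈ Set.Icc (⨅ i', Ψ i' j) (⨆ i', Ψ i' j) := fun j k =>
    ⟨ciInf_le (Finite.bddBelow_range fun i' => Ψ i' j) k,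
      le_ciSup (Finite.bddAbove_range fun i' => Ψ i' j) k⟩
  have hstep : ∀ j, 1 ≤ j → j ≤ Nt → (∀ i, 0 ≤ Ψ i j) → ∀ i,
      1 / (1 + Δt / lam * G) * (⨅ i', Ψ i' j) ≤ Ψ i (j - 1) ∧ Ψ i (j - 1) ≤ ⨆ i', Ψ i' j :=
    fun j hj hjN hpos i =>
      upwind_step_bounds hΔt0 hΔx0 hlam hν.le (hCFLx i) (hg i j hjN).1 (hg i j hjN).2
        (le_ciInf hpos) (hmem j i) (hmem j (i + 1)) (hmem j (i - 1)) (hscheme j hj hjN i)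
  have hG : 0 ≤ G := (hg 0 Nt le_rfl).1.trans (hg 0 Nt le_rfl).2
  refine ⟨hstep, pow_mul_iInf_le_of_backward_step Ψ Nt (by positivity) fun j hj hjN hpos i => ?_⟩
  simpa only [one_div] using (hstep j hj hjN hpos i).1

/-- One-step minimum/maximum principle for the explicit backward
finite-difference scheme, and the resulting lower bound after iterating from
the terminal time. -/
theorem stmt4 (T : ℝ) (hT : 0 < T) (Nx Nt : ℕ) (hNx : 1 ≤ Nx) (hNt : 1 ≤ Nt)
    (f : ℝ → ℝ) (hf : Continuous f) (hfper : Function.Periodic f 2)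
    (g : ℝ → ℝ → ℝ) (G : ℝ)
    (lam ν : ℝ) (hlam : 0 < lam) (hν : 0 < ν)
    -- grid parameters
    (Δx Δt α β : ℝ)
    (hΔx : Δx = 1 / (Nx : ℝ)) (hΔt : Δt = T / (Nt : ℝ))
    (hα : α = Δt / Δx) (hβ : β = Δt / Δx ^ 2)
    (x : ZMod (2 * Nx + 1) → ℝ) (hx : ∀ i, x i = (ZMod.val i : ℝ) * Δx)
    -- CFL condition
    (hCFL : α * sSup ((fun y => |f y|) '' Set.Icc (-1 : ℝ) 1) + 2 * β * ν < 1)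
    -- data M̄ with 0 ≤ g(x_i, M̄_{i,j}) ≤ G, and the scheme solution Ψ
    (M Ψ : ZMod (2 * Nx + 1) → ℕ → ℝ)
    (hg : ∀ i, ∀ j ≤ Nt, 0 ≤ g (x i) (M i j) ∧ g (x i) (M i j) ≤ G)
    (hscheme : ∀ j, 1 ≤ j → j ≤ Nt → ∀ i,
      (Ψ i (j - 1) - Ψ i j) / Δt =
        max (f (x i)) 0 * ((Ψ (i + 1) j - Ψ i j) / Δx)
          + min (f (x i)) 0 * ((Ψ i j - Ψ (i - 1) j) / Δx)
          + ν * ((Ψ (i + 1) j - 2 * Ψ i j + Ψ (i - 1) j) / Δx ^ 2)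
          - (1 / lam) * g (x i) (M i j) * Ψ i (j - 1)) :
    (∀ j, 1 ≤ j → j ≤ Nt → (∀ i, 0 ≤ Ψ i j) → ∀ i,
      (1 / (1 + (Δt / lam) * G)) * (⨅ i' : ZMod (2 * Nx + 1), Ψ i' j) ≤ Ψ i (j - 1) ∧
      Ψ i (j - 1) ≤ ⨆ i' : ZMod (2 * Nx + 1), Ψ i' j) ∧
    ((∀ i, 0 ≤ Ψ i Nt) → ∀ i, ∀ j ≤ Nt,
      ((1 + (Δt / lam) * G)⁻¹) ^ (Nt - j)
          * (⨅ i' : ZMod (2 * Nx + 1), Ψ i' Nt) ≤ Ψ i j) :=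
  stmt4_general T hT Nx Nt hNx hNt f hf hfper g G lam ν hlam hν Δx Δt α β hΔx hΔt hα hβ x hCFL M Ψ
    hg hscheme
end

section
/- Under the hypotheses of the fictitious-play error theorem, suppose in addition that v^{(k)} := -λ ln ψ^{(k)} converges uniformly on Ω×[0,T] to a continuous function v as k → ∞, that Ψ^{(k)}_{i,j} ≥ Γ_min > 0 uniformly in i, j, k, Δx, Δt, and that there exist increasing positive functions K₁(k), K₂(k) with sup_{i,j}|ψ^{(k)}(x_i,t_j) - Ψ^{(k)}_{i,j}| ≤ K₁(k)(Δx+Δt) + K₂(k)δ^{(0)} for all k, Δx, Δt, δ^{(0)}. Then for every ε > 0 there exists k₀ such that for every k ≥ k₀ there exists η > 0 so that whenever Δx < η, Δt < η and δ^{(0)} < η, one has sup_{i,j}|v(x_i,t_j) - (-λ ln Ψ^{(k)}_{i,j})| < ε. Equivalently, lim_{k→∞} lim_{Δt,Δx,δ^{(0)}→0} sup_{i,j}|v(x_i,t_j) - (-λ ln Ψ^{(k)}_{i,j})| = 0. -/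
/-!
For `k` large the continuous value `-λ ln ψ^{(k)}` is `ε/2`-close to `v` uniformly on
`Ω × [0, T]`. For that fixed `k`, the discretization error `|ψ^{(k)} - Ψ^{(k)}|` is below any
prescribed `m > 0` once `Δx`, `Δt`, `δ^{(0)}` are small enough, and since `Ψ^{(k)} ≥ Γ_min`,
`u ↦ -λ ln u` is uniformly continuous near the values involved, so the logarithms are
`ε/2`-close as well.
-/

open Set

namespace Real

theorem abs_log_sub_log_le_div {a b c : ℝ} (hc : 0 < c) (ha : c ≤ a) (hb : c ≤ b) :
    |log a - log b| ≤ |a - b| / c := by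
  wlog hba : b ≤ a generalizing a b
  · rw [abs_sub_comm, abs_sub_comm a b]
    exact this hb ha (le_of_not_ge hba)
  have hb0 : 0 < b := hc.trans_le hb
  have ha0 : 0 < a := hc.trans_le ha
  rw [abs_of_nonneg (sub_nonneg.2 (log_le_log hb0 hba)), abs_of_nonneg (sub_nonneg.2 hba),
    ← log_div ha0.ne' hb0.ne']
  calc log (a / b) ≤ a / b - 1 := log_le_sub_one_of_pos (div_pos ha0 hb0)
    _ = (a - b) / b := by field_simp
    _ ≤ (a - b) / c := div_le_div_of_nonneg_left (sub_nonneg.2 hba) hc hb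

theorem lipschitzOnWith_log_Ici {c : ℝ} (hc : 0 < c) :
    LipschitzOnWith (toNNReal c⁻¹) log (Ici c) :=
  .of_dist_le' fun a ha b hb => by
    simpa only [dist_eq, div_eq_inv_mul] using abs_log_sub_log_le_div hc ha hb

theorem exists_pos_abs_mul_log_sub_lt (lam : ℝ) {Γ ε : ℝ} (hΓ : 0 < Γ) (hε : 0 < ε) :
    ∃ m > 0, ∀ a b, Γ ≤ b → |a - b| < m → |lam * log a - lam * log b| < ε := by
  have huc : UniformContinuousOn (fun u => lam * log u) (Ici (Γ / 2)) :=
    (uniformContinuous_mul_left' lam).comp_uniformContinuousOn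
      (lipschitzOnWith_log_Ici (half_pos hΓ)).uniformContinuousOn
  obtain ⟨δ, hδ, hclose⟩ := Metric.uniformContinuousOn_iff.1 huc ε hε
  refine ⟨min δ (Γ / 2), lt_min hδ (half_pos hΓ), fun a b hb hab => ?_⟩
  have ha : Γ / 2 ≤ a := by
    linarith [(abs_lt.1 (hab.trans_le (min_le_right _ _))).1]
  exact hclose a ha b (mem_Ici.2 (by linarith)) (hab.trans_le (min_le_left _ _))

end Real

theorem exists_pos_linear_lt (K₁ K₂ : ℝ) {m : ℝ} (hm : 0 < m) :
    ∃ η > 0, ∀ a b c : ℝ, |a| < η → |b| < η → |c| < η → K₁ * (a + b) + K₂ * c < m := by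
  have hcont : Continuous fun p : ℝ × ℝ × ℝ => K₁ * (p.1 + p.2.1) + K₂ * p.2.2 := by
    fun_prop
  obtain ⟨η, hη, hsmall⟩ := Metric.continuousAt_iff.1 hcont.continuousAt m hm
  refine ⟨η, hη, fun a b c ha hb hc => ?_⟩
  have hdist : dist (a, b, c) 0 < η := by simp [ha, hb, hc]
  simpa [Real.dist_eq] using (le_abs_self _).trans_lt (hsmall hdist)

theorem natCast_mul_div_mem_Icc {T : ℝ} (hT : 0 ≤ T) {j N : ℕ} (hj : j ≤ N) :
    (j : ℝ) * (T / N) ∈ Icc 0 T := by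
  rcases N.eq_zero_or_pos with rfl | hN
  · simp [hT]
  refine ⟨by positivity, ?_⟩
  calc (j : ℝ) * (T / N) ≤ N * (T / N) := by gcongr
    _ = T := mul_div_cancel₀ T (by positivity)

theorem stmt11_general (T lam : ℝ) (hT : 0 < T)
    -- continuous fictitious-play iterates ψ^{(k)} > 0 and limit value function v
    (ψ : ℕ → ℝ → ℝ → ℝ)
    (v : ℝ → ℝ → ℝ)
    (hconv : ∀ ε > (0 : ℝ), ∃ k0 : ℕ, ∀ k ≥ k0, ∀ y : ℝ, ∀ t ∈ Set.Icc (0 : ℝ) T,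
      |(-lam * Real.log (ψ k y t)) - v y t| ≤ ε)
    -- discrete solutions Ψ^{(k)} for each grid (Nx, Nt), uniformly ≥ Γmin > 0
    (PD : ∀ Nx : ℕ, ∀ _Nt : ℕ, ∀ _k : ℕ, ZMod (2 * Nx + 1) → ℕ → ℝ)
    (Γmin : ℝ) (hΓmin : 0 < Γmin)
    (hPDlb : ∀ Nx Nt : ℕ, 1 ≤ Nx → 1 ≤ Nt → ∀ k : ℕ,
      ∀ i : ZMod (2 * Nx + 1), ∀ j ≤ Nt, Γmin ≤ PD Nx Nt k i j)
    -- initial discretization error δ⁰ of the density, for each grid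
    (δ0 : ℕ → ℕ → ℝ) (hδ0 : ∀ Nx Nt : ℕ, 0 ≤ δ0 Nx Nt)
    -- the fictitious-play error bound with increasing positive constants
    (K1 K2 : ℕ → ℝ)
    (hbound : ∀ Nx Nt : ℕ, 1 ≤ Nx → 1 ≤ Nt → ∀ k : ℕ,
      ∀ i : ZMod (2 * Nx + 1), ∀ j ≤ Nt,
        |ψ k ((ZMod.val i : ℝ) * (1 / (Nx : ℝ))) ((j : ℝ) * (T / (Nt : ℝ)))
            - PD Nx Nt k i j| ≤
          K1 k * (1 / (Nx : ℝ) + T / (Nt : ℝ)) + K2 k * δ0 Nx Nt) :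
    ∀ ε > (0 : ℝ), ∃ k0 : ℕ, ∀ k ≥ k0, ∃ η > (0 : ℝ),
      ∀ Nx Nt : ℕ, 1 ≤ Nx → 1 ≤ Nt →
        1 / (Nx : ℝ) < η → T / (Nt : ℝ) < η → δ0 Nx Nt < η →
        ∀ i : ZMod (2 * Nx + 1), ∀ j ≤ Nt,
          |v ((ZMod.val i : ℝ) * (1 / (Nx : ℝ))) ((j : ℝ) * (T / (Nt : ℝ)))
              - (-lam * Real.log (PD Nx Nt k i j))| < ε := by
  intro ε hε
  obtain ⟨k0, hk0⟩ := hconv (ε / 2) (half_pos hε)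
  obtain ⟨m, hm, hlog⟩ := Real.exists_pos_abs_mul_log_sub_lt (-lam) hΓmin (half_pos hε)
  refine ⟨k0, fun k hk => ?_⟩
  obtain ⟨η, hη, hlin⟩ := exists_pos_linear_lt (K1 k) (K2 k) hm
  refine ⟨η, hη, fun Nx Nt hNx hNt hΔx hΔt hδ i j hj => ?_⟩
  set y : ℝ := (ZMod.val i : ℝ) * (1 / (Nx : ℝ))
  set t : ℝ := (j : ℝ) * (T / (Nt : ℝ))
  have hψ := hk0 k hk y t (natCast_mul_div_mem_Icc hT.le hj)
  have hdisc := (hbound Nx Nt hNx hNt k i j hj).trans_lt <| hlin _ _ _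
    (by rwa [abs_of_pos (by positivity)]) (by rwa [abs_of_pos (by positivity)])
    (by rwa [abs_of_nonneg (hδ0 Nx Nt)])
  have hΨ := hlog _ _ (hPDlb Nx Nt hNx hNt k i j hj) hdisc
  calc |v y t - -lam * Real.log (PD Nx Nt k i j)|
      ≤ |v y t - -lam * Real.log (ψ k y t)|
        + |-lam * Real.log (ψ k y t) - -lam * Real.log (PD Nx Nt k i j)| := abs_sub_le _ _ _
    _ < ε / 2 + ε / 2 := add_lt_add_of_le_of_lt (by rwa [abs_sub_comm]) hΨ
    _ = ε := add_halves ε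

/-- Double-limit convergence of the discrete value functions: if
`v^{(k)} = -λ ln ψ^{(k)}` converges uniformly to `v`, the discrete solutions
`Ψ^{(k)}` are uniformly bounded below by `Γ_min > 0`, and the discretization
error of `ψ^{(k)}` is controlled by `K₁(k)(Δx+Δt) + K₂(k)δ⁰`, then
`lim_{k→∞} lim_{Δt,Δx,δ⁰→0} sup_{i,j} |v(x_i,t_j) - (-λ ln Ψ^{(k)}_{i,j})| = 0`. -/
theorem stmt11 (T lam : ℝ) (hT : 0 < T) (hlam : 0 < lam)
    -- continuous fictitious-play iterates ψ^{(k)} > 0 and limit value function v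
    (ψ : ℕ → ℝ → ℝ → ℝ) (hψpos : ∀ k y t, 0 < ψ k y t)
    (v : ℝ → ℝ → ℝ) (hv : Continuous fun p : ℝ × ℝ => v p.1 p.2)
    (hconv : ∀ ε > (0 : ℝ), ∃ k0 : ℕ, ∀ k ≥ k0, ∀ y : ℝ, ∀ t ∈ Set.Icc (0 : ℝ) T,
      |(-lam * Real.log (ψ k y t)) - v y t| ≤ ε)
    -- discrete solutions Ψ^{(k)} for each grid (Nx, Nt), uniformly ≥ Γmin > 0
    (PD : ∀ Nx : ℕ, ∀ _Nt : ℕ, ∀ _k : ℕ, ZMod (2 * Nx + 1) → ℕ → ℝ)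
    (Γmin : ℝ) (hΓmin : 0 < Γmin)
    (hPDlb : ∀ Nx Nt : ℕ, 1 ≤ Nx → 1 ≤ Nt → ∀ k : ℕ,
      ∀ i : ZMod (2 * Nx + 1), ∀ j ≤ Nt, Γmin ≤ PD Nx Nt k i j)
    -- initial discretization error δ⁰ of the density, for each grid
    (δ0 : ℕ → ℕ → ℝ) (hδ0 : ∀ Nx Nt : ℕ, 0 ≤ δ0 Nx Nt)
    -- the fictitious-play error bound with increasing positive constants
    (K1 K2 : ℕ → ℝ) (hK1m : Monotone K1) (hK2m : Monotone K2)
    (hK1p : ∀ k, 0 < K1 k) (hK2p : ∀ k, 0 < K2 k)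
    (hbound : ∀ Nx Nt : ℕ, 1 ≤ Nx → 1 ≤ Nt → ∀ k : ℕ,
      ∀ i : ZMod (2 * Nx + 1), ∀ j ≤ Nt,
        |ψ k ((ZMod.val i : ℝ) * (1 / (Nx : ℝ))) ((j : ℝ) * (T / (Nt : ℝ)))
            - PD Nx Nt k i j| ≤
          K1 k * (1 / (Nx : ℝ) + T / (Nt : ℝ)) + K2 k * δ0 Nx Nt) :
    ∀ ε > (0 : ℝ), ∃ k0 : ℕ, ∀ k ≥ k0, ∃ η > (0 : ℝ),
      ∀ Nx Nt : ℕ, 1 ≤ Nx → 1 ≤ Nt →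
        1 / (Nx : ℝ) < η → T / (Nt : ℝ) < η → δ0 Nx Nt < η →
        ∀ i : ZMod (2 * Nx + 1), ∀ j ≤ Nt,
          |v ((ZMod.val i : ℝ) * (1 / (Nx : ℝ))) ((j : ℝ) * (T / (Nt : ℝ)))
              - (-lam * Real.log (PD Nx Nt k i j))| < ε :=
  stmt11_general T lam hT ψ v hconv PD Γmin hΓmin hPDlb δ0 hδ0 K1 K2 hbound
end
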